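/- arXiv:2403.09763 — 2 statements merged into one kernel-verified Lean document; each statement's English description precedes it below -/
import Mathlib

section
/- Fix K ∈ ℕ, battery capacity l_max ∈ ℝ, initial level λ₀ ≤ l_max, energy consumptions e_k ≥ 0 and charging caps c_k ≥ 0 for k = 0, …, K−1. For a charging schedule w = (w_0, …, w_{K−1}), define its battery levels by L_0 = λ₀ and L_{k+1} = L_k + w_k − e_k; call w admissible if 0 ≤ w_k ≤ c_k and L_k + w_k ≤ l_max for all k < K. Define the greedy levels by G_0 = λ₀ and G_{k+1} = min(l_max, G_k + c_k) − e_k. Then for every admissible schedule w with levels L, one has G_k ≥ L_k for all k = 0, …, K (greedy maximum-rate charging pointwise dominates every admissible schedule). -/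
/-- Battery levels of a charging schedule `w`: `L 0 = lam0`,
`L (k+1) = L k + w k - e k`. -/
def batteryLevels (lam0 : ℝ) (e w : ℕ → ℝ) : ℕ → ℝ
  | 0 => lam0
  | k + 1 => batteryLevels lam0 e w k + w k - e k

/-- Greedy (maximum-rate) battery levels: `G 0 = lam0`,
`G (k+1) = min lmax (G k + c k) - e k`. -/
def greedyLevels (lam0 lmax : ℝ) (e c : ℕ → ℝ) : ℕ → ℝ
  | 0 => lam0
  | k + 1 => min lmax (greedyLevels lam0 lmax e c k + c k) - e k

/- An admissible step is dominated by the greedy step applied to the same level; since the greedy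
step `x ↦ min lmax (x + c k) - e k` is monotone, domination then propagates by induction. -/

theorem batteryLevels_succ_le_min {lam0 lmax : ℝ} {e c w : ℕ → ℝ} {k : ℕ} (hwc : w k ≤ c k)
    (hcap : batteryLevels lam0 e w k + w k ≤ lmax) :
    batteryLevels lam0 e w (k + 1) ≤ min lmax (batteryLevels lam0 e w k + c k) - e k :=
  sub_le_sub_right (le_min hcap (by linarith)) _

theorem stmt3_general (K : ℕ) (lmax lam0 : ℝ) (e c w : ℕ → ℝ)
    (hadm : ∀ k < K, 0 ≤ w k ∧ w k ≤ c k ∧ batteryLevels lam0 e w k + w k ≤ lmax) :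
    ∀ k ≤ K, batteryLevels lam0 e w k ≤ greedyLevels lam0 lmax e c k := by
  intro k hk
  induction k with
  | zero => exact le_rfl
  | succ n ih =>
    obtain ⟨-, hwc, hcap⟩ := hadm n hk
    calc batteryLevels lam0 e w (n + 1)
        ≤ min lmax (batteryLevels lam0 e w n + c n) - e n := batteryLevels_succ_le_min hwc hcap
      _ ≤ min lmax (greedyLevels lam0 lmax e c n + c n) - e n := by
        gcongr
        exact ih (Nat.le_of_succ_le hk)

/-- Greedy maximum-rate charging pointwise dominates every
admissible charging schedule. -/
theorem stmt3 (K : ℕ) (lmax lam0 : ℝ) (e c w : ℕ → ℝ)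
    (h0 : lam0 ≤ lmax)
    (he : ∀ k < K, 0 ≤ e k) (hc : ∀ k < K, 0 ≤ c k)
    (hadm : ∀ k < K, 0 ≤ w k ∧ w k ≤ c k ∧ batteryLevels lam0 e w k + w k ≤ lmax) :
    ∀ k ≤ K, batteryLevels lam0 e w k ≤ greedyLevels lam0 lmax e c k :=
  stmt3_general K lmax lam0 e c w hadm
end

section
/- Fix K ∈ ℕ, battery bounds l_min ≤ l_max in ℝ, initial level λ₀ with l_min ≤ λ₀ ≤ l_max, energy consumptions e_k ≥ 0 and charging caps c_k ≥ 0 for k = 0, …, K−1. There exists an admissible charging schedule w (i.e. 0 ≤ w_k ≤ c_k and L_k + w_k ≤ l_max for all k, where L_0 = λ₀ and L_{k+1} = L_k + w_k − e_k) whose levels satisfy L_k ≥ l_min for all k = 0, …, K, if and only if the greedy levels G_0 = λ₀, G_{k+1} = min(l_max, G_k + c_k) − e_k satisfy G_k ≥ l_min for all k = 0, …, K. Moreover the greedy levels are themselves realized by the admissible schedule w_k = min(c_k, l_max − G_k). (This is the correctness of the charge-feasibility check that charges each bus at the maximum possible rate at every charging opportunity.) -/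
def IsAdmissibleSchedule (K : ℕ) (lmax lam0 : ℝ) (e c w : ℕ → ℝ) : Prop :=
  ∀ k < K, 0 ≤ w k ∧ w k ≤ c k ∧ batteryLevels lam0 e w k + w k ≤ lmax

def greedySchedule (lam0 lmax : ℝ) (e c : ℕ → ℝ) (k : ℕ) : ℝ :=
  min (c k) (lmax - greedyLevels lam0 lmax e c k)

lemma add_min_sub_eq_min (a b c : ℝ) : a + min c (b - a) = min b (a + c) := by
  rw [← min_add_add_left, add_sub_cancel, min_comm]

lemma batteryLevels_greedySchedule (lam0 lmax : ℝ) (e c : ℕ → ℝ) (k : ℕ) :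
    batteryLevels lam0 e (greedySchedule lam0 lmax e c) k = greedyLevels lam0 lmax e c k := by
  induction k with
  | zero => rfl
  | succ k ih =>
    rw [batteryLevels, greedyLevels, ih, greedySchedule, add_min_sub_eq_min]

lemma greedyLevels_le {K : ℕ} {lmax lam0 : ℝ} {e : ℕ → ℝ} (c : ℕ → ℝ) (h0 : lam0 ≤ lmax)
    (he : ∀ k < K, 0 ≤ e k) {k : ℕ} (hk : k ≤ K) : greedyLevels lam0 lmax e c k ≤ lmax := by
  cases k with
  | zero => exact h0
  | succ k =>
    have := he k hk
    have := min_le_left lmax (greedyLevels lam0 lmax e c k + c k)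
    rw [greedyLevels]
    linarith

lemma isAdmissibleSchedule_greedySchedule {K : ℕ} {lmax lam0 : ℝ} {e c : ℕ → ℝ}
    (h0 : lam0 ≤ lmax) (he : ∀ k < K, 0 ≤ e k) (hc : ∀ k < K, 0 ≤ c k) :
    IsAdmissibleSchedule K lmax lam0 e c (greedySchedule lam0 lmax e c) := by
  intro k hk
  have hG := greedyLevels_le c h0 he hk.le
  refine ⟨le_min (hc k hk) (sub_nonneg.mpr hG), min_le_left _ _, ?_⟩
  rw [batteryLevels_greedySchedule, greedySchedule, add_min_sub_eq_min]
  exact min_le_left _ _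

lemma batteryLevels_le_greedyLevels {K : ℕ} {lmax lam0 : ℝ} {e c w : ℕ → ℝ}
    (hw : IsAdmissibleSchedule K lmax lam0 e c w) {k : ℕ} (hk : k ≤ K) :
    batteryLevels lam0 e w k ≤ greedyLevels lam0 lmax e c k := by
  induction k with
  | zero => exact le_rfl
  | succ k ih =>
    obtain ⟨-, hwc, hwl⟩ := hw k hk
    have hcharged :
        batteryLevels lam0 e w k + w k ≤ min lmax (greedyLevels lam0 lmax e c k + c k) :=
      le_min hwl (add_le_add (ih (by omega)) hwc)
    rw [batteryLevels, greedyLevels]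
    linarith

theorem stmt4_general (K : ℕ) (lmin lmax lam0 : ℝ) (e c : ℕ → ℝ)
    (h0' : lam0 ≤ lmax)
    (he : ∀ k < K, 0 ≤ e k) (hc : ∀ k < K, 0 ≤ c k) :
    ((∃ w : ℕ → ℝ,
        (∀ k < K, 0 ≤ w k ∧ w k ≤ c k ∧ batteryLevels lam0 e w k + w k ≤ lmax) ∧
        (∀ k ≤ K, lmin ≤ batteryLevels lam0 e w k)) ↔
      (∀ k ≤ K, lmin ≤ greedyLevels lam0 lmax e c k)) ∧
    (∀ k < K,
        0 ≤ min (c k) (lmax - greedyLevels lam0 lmax e c k) ∧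
        min (c k) (lmax - greedyLevels lam0 lmax e c k) ≤ c k ∧
        batteryLevels lam0 e (fun j => min (c j) (lmax - greedyLevels lam0 lmax e c j)) k
          + min (c k) (lmax - greedyLevels lam0 lmax e c k) ≤ lmax) ∧
    (∀ k ≤ K,
        batteryLevels lam0 e (fun j => min (c j) (lmax - greedyLevels lam0 lmax e c j)) k
          = greedyLevels lam0 lmax e c k) := by
  have hadm := isAdmissibleSchedule_greedySchedule h0' he hc
  refine ⟨⟨?_, fun hG => ⟨_, hadm, fun k hk => ?_⟩⟩, hadm,
    fun k _ => batteryLevels_greedySchedule lam0 lmax e c k⟩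
  · rintro ⟨w, hw, hlev⟩ k hk
    exact (hlev k hk).trans (batteryLevels_le_greedyLevels hw hk)
  · exact (batteryLevels_greedySchedule lam0 lmax e c k).symm ▸ hG k hk

/-- An admissible charging schedule keeping all levels at least
`lmin` exists iff the greedy levels stay at least `lmin`; moreover the greedy
levels are realized by the admissible schedule
`w k = min (c k) (lmax - G k)`. -/
theorem stmt4 (K : ℕ) (lmin lmax lam0 : ℝ) (e c : ℕ → ℝ)
    (hbounds : lmin ≤ lmax) (h0 : lmin ≤ lam0) (h0' : lam0 ≤ lmax)
    (he : ∀ k < K, 0 ≤ e k) (hc : ∀ k < K, 0 ≤ c k) :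
    ((∃ w : ℕ → ℝ,
        (∀ k < K, 0 ≤ w k ∧ w k ≤ c k ∧ batteryLevels lam0 e w k + w k ≤ lmax) ∧
        (∀ k ≤ K, lmin ≤ batteryLevels lam0 e w k)) ↔
      (∀ k ≤ K, lmin ≤ greedyLevels lam0 lmax e c k)) ∧
    (∀ k < K,
        0 ≤ min (c k) (lmax - greedyLevels lam0 lmax e c k) ∧
        min (c k) (lmax - greedyLevels lam0 lmax e c k) ≤ c k ∧
        batteryLevels lam0 e (fun j => min (c j) (lmax - greedyLevels lam0 lmax e c j)) k
          + min (c k) (lmax - greedyLevels lam0 lmax e c k) ≤ lmax) ∧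
    (∀ k ≤ K,
        batteryLevels lam0 e (fun j => min (c j) (lmax - greedyLevels lam0 lmax e c j)) k
          = greedyLevels lam0 lmax e c k) :=
  stmt4_general K lmin lmax lam0 e c h0' he hc
end
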